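/- arXiv:1809.03866 — 2 statements merged into one kernel-verified Lean document; each statement's English description precedes it below -/
import Mathlib

section
/- Suppose B, β, μ > 0 and α, d ≥ 0. Let (Ω, ℱ, P) be a probability space and let T₁, T₂, T₃ : Ω → ℝ be nonnegative random variables such that T₁ and T₂ are independent and P(T₂ > 0) > 0. Set S₀* = B/μ, K̂₀ = 4 + S₀*, ε₁ = E[exp(−μT₁)], ε₁₂ = E[exp(−μ(T₁+T₂))], ε₃ = E[exp(−μT₃)]. Assume the basic reproduction number R₀ = (β·S₀*·K̂₀ + α)/(μ+d+α) satisfies R₀ > 1, and assume ε₁₂ ≥ (K̂₀ + α/(β·S₀*))/g(0). Then there exists a unique triple (S*, E*, I*) with S* > 0, E* > 0, I* > 0 satisfying the endemic steady-state equations: B − β·S*·ε₁·G(I*) − μ·S* + α·I*·ε₃ = 0; β·S*·ε₁·G(I*) − μ·E* − β·S*·ε₁₂·G(I*) = 0; and β·S*·ε₁₂·G(I*) − (μ+d+α)·I* = 0. -/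
/-!
Solving the third steady-state equation for `S*` and the second for `E*` leaves the scalar
equation `B - k I - c · I / G I = 0` with `k = ε₁ (μ + d + α) / ε₁₂ - α ε₃` and
`c = μ (μ + d + α) / (β ε₁₂)`; here `k > 0` because `ε₁₂ < ε₁` (as `P(T₂ > 0) > 0`) and `ε₃ ≤ 1`.
Strict concavity of `G` with `G 0 = 0` makes `I / G I` strictly increasing on `(0, ∞)`, so the
left-hand side is strictly decreasing there. As `I → 0⁺` it tends to `B - c / g 0`, which is
positive by `R₀ > 1` together with the lower bound on `ε₁₂`, and it tends to `-∞` as `I → ∞`;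
hence it has exactly one positive root.
-/

open MeasureTheory Filter Set Topology Real

lemma HasDerivAt.nonneg_of_monotoneOn_Ici {f : ℝ → ℝ} {f' x : ℝ} (hd : HasDerivAt f f' x)
    (hf : MonotoneOn f (Ici x)) : 0 ≤ f' :=
  hd.hasDerivWithinAt.nonneg_of_monotoneOn
    (accPt_principal_iff_nhdsWithin.2 <| by
      rw [sdiff_singleton_eq_self self_notMem_Ioi]; infer_instance)
    (hf.mono Ioi_subset_Ici_self)

lemma StrictAntiOn.pos_of_hasDerivAt {f f' : ℝ → ℝ} {a : ℝ}
    (hf : ∀ x ≥ a, HasDerivAt f (f' x) x) (hmono : MonotoneOn f (Ici a))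
    (hanti : StrictAntiOn f' (Ici a)) : 0 < f' a :=
  (hanti self_mem_Ici (mem_Ici.2 (le_add_of_nonneg_right zero_le_one)) (lt_add_one a)).trans_le'
    ((hf (a + 1) (le_add_of_nonneg_right zero_le_one)).nonneg_of_monotoneOn_Ici
      (hmono.mono (Ici_subset_Ici.2 (le_add_of_nonneg_right zero_le_one))))

lemma StrictAntiOn.strictConcaveOn_of_hasDerivAt {D : Set ℝ} (hD : Convex ℝ D) {f f' : ℝ → ℝ}
    (hf : ∀ x ∈ D, HasDerivAt f (f' x) x) (hf' : StrictAntiOn f' D) : StrictConcaveOn ℝ D f :=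
  StrictAntiOn.strictConcaveOn_of_deriv hD (fun x hx ↦ (hf x hx).continuousAt.continuousWithinAt)
    fun x hx y hy hxy ↦ by
      rw [(hf x (interior_subset hx)).deriv, (hf y (interior_subset hy)).deriv]
      exact hf' (interior_subset hx) (interior_subset hy) hxy

lemma StrictConcaveOn.strictMonoOn_div_self {G : ℝ → ℝ} (hG : StrictConcaveOn ℝ (Ici 0) G)
    (hG0 : G 0 = 0) (hpos : ∀ x > 0, 0 < G x) : StrictMonoOn (fun x ↦ x / G x) (Ioi 0) := by
  intro x hx y hy hxy
  have hx : 0 < x := hx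
  have hy : 0 < y := hy
  have hslope : G y / y < G x / x := by
    simpa [hG0] using hG.secant_strict_mono self_mem_Ici hx.le hy.le hx.ne' hy.ne' hxy
  simp only [← inv_div (G _)]
  exact inv_strictAnti₀ (div_pos (hpos y hy) hy) hslope

lemma HasDerivAt.tendsto_div_self_nhdsGT_zero {G : ℝ → ℝ} {g₀ : ℝ} (hd : HasDerivAt G g₀ 0)
    (hG0 : G 0 = 0) (hg₀ : g₀ ≠ 0) :
    Tendsto (fun x ↦ x / G x) (𝓝[>] 0) (𝓝 g₀⁻¹) := by
  refine (hd.tendsto_slope_zero_right.inv₀ hg₀).congr fun x ↦ ?_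
  simp [hG0, div_eq_mul_inv, mul_comm]

lemma existsUnique_zero_of_strictAntiOn_Ioi {F : ℝ → ℝ} {a b L : ℝ}
    (hcont : ContinuousOn F (Ioi a)) (hanti : StrictAntiOn F (Ioi a))
    (hlim : Tendsto F (𝓝[>] a) (𝓝 L)) (hL : 0 < L) (hab : a < b) (hb : F b ≤ 0) :
    ∃! x, a < x ∧ F x = 0 := by
  obtain ⟨x₀, hFx₀, hx₀b, hax₀⟩ := ((hlim.eventually (eventually_gt_nhds hL)).and
    (((eventually_lt_nhds hab).filter_mono nhdsWithin_le_nhds).and self_mem_nhdsWithin)).exists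
  have hIcc : Icc x₀ b ⊆ Ioi a := fun x hx ↦ lt_of_lt_of_le hax₀ hx.1
  obtain ⟨x, hx, hFx⟩ :=
    intermediate_value_Icc' hx₀b.le (hcont.mono hIcc) ⟨hb, hFx₀.le⟩
  exact ⟨x, ⟨hIcc hx, hFx⟩, fun y ⟨hy, hFy⟩ ↦ hanti.injOn hy (hIcc hx) (hFy.trans hFx.symm)⟩

lemma existsUnique_pos_sub_mul_sub_mul_eq_zero {φ : ℝ → ℝ} {B k c L : ℝ} (hk : 0 < k)
    (hc : 0 ≤ c) (hcont : ContinuousOn φ (Ioi 0)) (hmono : StrictMonoOn φ (Ioi 0))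
    (hnonneg : ∀ x > 0, 0 ≤ φ x) (hlim : Tendsto φ (𝓝[>] 0) (𝓝 L)) (hL : c * L < B) :
    ∃! x, 0 < x ∧ B - k * x - c * φ x = 0 := by
  have hb : 0 < (|B| + 1) / k := by positivity
  refine existsUnique_zero_of_strictAntiOn_Ioi (L := B - k * 0 - c * L)
    (by fun_prop) (fun x hx y hy hxy ↦ ?_) ?_ (by simpa using hL) hb ?_
  · have := mul_le_mul_of_nonneg_left (hmono hx hy hxy).le hc
    have := mul_lt_mul_of_pos_left hxy hk
    linarith
  · exact ((tendsto_const_nhds.sub ((continuous_const_mul k).tendsto 0)).mono_left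
      nhdsWithin_le_nhds).sub (hlim.const_mul c)
  · have : k * ((|B| + 1) / k) = |B| + 1 := by field_simp
    nlinarith [le_abs_self B, hnonneg _ hb]

lemma exp_neg_mul_le_one {μ t : ℝ} (hμ : 0 ≤ μ) (ht : 0 ≤ t) : exp (-μ * t) ≤ 1 :=
  exp_le_one_iff.2 (by nlinarith)

section LaplaceTransform

variable {Ω : Type*} [MeasurableSpace Ω] {P : Measure Ω} {T T' : Ω → ℝ} {μ : ℝ}

lemma integrable_exp_neg_mul [IsFiniteMeasure P] (hTm : Measurable T) (hT : ∀ ω, 0 ≤ T ω)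
    (hμ : 0 ≤ μ) : Integrable (fun ω ↦ exp (-μ * T ω)) P :=
  .of_bound (by fun_prop) 1 (.of_forall fun ω ↦ by
    simpa [abs_of_pos (exp_pos _)] using exp_neg_mul_le_one hμ (hT ω))

lemma integral_exp_neg_mul_le_one [IsProbabilityMeasure P] (hT : ∀ ω, 0 ≤ T ω) (hμ : 0 ≤ μ) :
    ∫ ω, exp (-μ * T ω) ∂P ≤ 1 := by
  simpa using integral_mono_of_nonneg (μ := P) (.of_forall fun ω ↦ (exp_pos _).le)
    (integrable_const (1 : ℝ)) (.of_forall fun ω ↦ exp_neg_mul_le_one hμ (hT ω))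

lemma integral_exp_neg_mul_add_lt [IsFiniteMeasure P] (hTm : Measurable T) (hT'm : Measurable T')
    (hT : ∀ ω, 0 ≤ T ω) (hT' : ∀ ω, 0 ≤ T' ω) (hμ : 0 < μ) (hpos : 0 < P {ω | 0 < T' ω}) :
    ∫ ω, exp (-μ * (T ω + T' ω)) ∂P < ∫ ω, exp (-μ * T ω) ∂P := by
  have hle : ∀ ω, exp (-μ * (T ω + T' ω)) ≤ exp (-μ * T ω) := fun ω ↦
    exp_le_exp.2 (by nlinarith [hT' ω])
  have hint := integrable_exp_neg_mul (P := P) hTm hT hμ.le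
  have hint' := integrable_exp_neg_mul (P := P) (hTm.add hT'm)
    (fun ω ↦ add_nonneg (hT ω) (hT' ω)) hμ.le
  simp only [Pi.add_apply] at hint'
  rw [← sub_pos, ← integral_sub hint hint',
    integral_pos_iff_support_of_nonneg (fun ω ↦ sub_nonneg.2 (hle ω)) (hint.sub hint')]
  refine hpos.trans_le (measure_mono fun ω (hω : 0 < T' ω) ↦ ?_)
  exact (sub_pos.2 (exp_lt_exp.2 (by nlinarith [hT ω]))).ne'

end LaplaceTransform

section SteadyState

variable {B β μ α d ε₁ ε₁₂ ε₃ S E I y : ℝ}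

lemma steadyState_iff (hβ : β ≠ 0) (hμ : μ ≠ 0) (hε₁₂ : ε₁₂ ≠ 0) (hy : y ≠ 0) :
    (B - β * S * ε₁ * y - μ * S + α * I * ε₃ = 0 ∧
      β * S * ε₁ * y - μ * E - β * S * ε₁₂ * y = 0 ∧
      β * S * ε₁₂ * y - (μ + d + α) * I = 0) ↔
    (S = (μ + d + α) * I / (β * ε₁₂ * y) ∧
      E = (ε₁ - ε₁₂) * (μ + d + α) * I / (μ * ε₁₂) ∧
      B - (ε₁ * (μ + d + α) / ε₁₂ - α * ε₃) * I - μ * (μ + d + α) / (β * ε₁₂) * (I / y) = 0) := by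
  constructor
  · rintro ⟨h₁, h₂, h₃⟩
    have hS : S = (μ + d + α) * I / (β * ε₁₂ * y) := by
      field_simp
      linear_combination h₃
    subst hS
    refine ⟨rfl, ?_, ?_⟩
    · rw [eq_div_iff (mul_ne_zero hμ hε₁₂)]
      field_simp at h₂
      linear_combination -h₂
    · field_simp at h₁ ⊢
      linear_combination h₁
  · rintro ⟨rfl, rfl, h⟩
    refine ⟨?_, ?_, ?_⟩
    · field_simp at h ⊢
      linear_combination h
    · field_simp
      ring
    · field_simp
      ring

end SteadyState

lemma mul_inv_lt_of_one_lt_reproductionNumber {B β μ α d S₀ K₀ ε₁₂ g₀ : ℝ} (hB : 0 < B)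
    (hβ : 0 < β) (hμ : 0 < μ) (hμdα : 0 < μ + d + α) (hε₁₂ : 0 < ε₁₂) (hg₀ : 0 < g₀)
    (hS₀ : S₀ = B / μ) (hR₀ : 1 < (β * S₀ * K₀ + α) / (μ + d + α))
    (hcond : (K₀ + α / (β * S₀)) / g₀ ≤ ε₁₂) :
    μ * (μ + d + α) / (β * ε₁₂) * g₀⁻¹ < B := by
  have hS₀pos : 0 < S₀ := hS₀ ▸ div_pos hB hμ
  rw [one_lt_div hμdα] at hR₀
  rw [div_le_iff₀ hg₀] at hcond
  replace hcond : β * S₀ * K₀ + α ≤ β * S₀ * (ε₁₂ * g₀) := by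
    have := mul_le_mul_of_nonneg_left hcond (mul_pos hβ hS₀pos).le
    rwa [mul_add, mul_div_cancel₀ _ (mul_pos hβ hS₀pos).ne'] at this
  have hB' : B = μ * S₀ := by rw [hS₀, mul_div_cancel₀ _ hμ.ne']
  rw [← div_eq_mul_inv, div_div, div_lt_iff₀ (by positivity), hB']
  nlinarith

theorem endemic_equilibrium_random_delays_general
    {Ω : Type*} [MeasurableSpace Ω] (P : Measure Ω) [IsProbabilityMeasure P]
    (T₁ T₂ T₃ : Ω → ℝ)
    (hT₁meas : Measurable T₁) (hT₂meas : Measurable T₂)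
    (hT₁nn : ∀ ω, 0 ≤ T₁ ω) (hT₂nn : ∀ ω, 0 ≤ T₂ ω) (hT₃nn : ∀ ω, 0 ≤ T₃ ω)
    (hT₂pos : 0 < P {ω | 0 < T₂ ω})
    (G g : ℝ → ℝ)
    (hderiv : ∀ x ≥ (0:ℝ), HasDerivAt G (g x) x)
    (hG0 : G 0 = 0)
    (hGmono : StrictMonoOn G (Set.Ici (0:ℝ)))
    (hganti : StrictAntiOn g (Set.Ici (0:ℝ)))
    (B β μ α d : ℝ) (hB : 0 < B) (hβ : 0 < β) (hμ : 0 < μ)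
    (hα : 0 ≤ α) (hd : 0 ≤ d)
    (S₀ K₀ ε₁ ε₁₂ ε₃ : ℝ)
    (hS₀ : S₀ = B / μ)
    (hε₁ : ε₁ = ∫ ω, Real.exp (-μ * T₁ ω) ∂P)
    (hε₁₂ : ε₁₂ = ∫ ω, Real.exp (-μ * (T₁ ω + T₂ ω)) ∂P)
    (hε₃ : ε₃ = ∫ ω, Real.exp (-μ * T₃ ω) ∂P)
    (hR₀ : 1 < (β * S₀ * K₀ + α) / (μ + d + α))
    (hcond : (K₀ + α / (β * S₀)) / g 0 ≤ ε₁₂) :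
    ∃! p : ℝ × ℝ × ℝ,
      0 < p.1 ∧ 0 < p.2.1 ∧ 0 < p.2.2 ∧
      B - β * p.1 * ε₁ * G p.2.2 - μ * p.1 + α * p.2.2 * ε₃ = 0 ∧
      β * p.1 * ε₁ * G p.2.2 - μ * p.2.1 - β * p.1 * ε₁₂ * G p.2.2 = 0 ∧
      β * p.1 * ε₁₂ * G p.2.2 - (μ + d + α) * p.2.2 = 0 := by
  have hμdα : 0 < μ + d + α := by linarith
  have hε₁₂pos : 0 < ε₁₂ := hε₁₂ ▸ integral_exp_pos (integrable_exp_neg_mul (hT₁meas.add hT₂meas)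
    (fun ω ↦ add_nonneg (hT₁nn ω) (hT₂nn ω)) hμ.le)
  have hε₁₂lt : ε₁₂ < ε₁ :=
    hε₁₂ ▸ hε₁ ▸ integral_exp_neg_mul_add_lt hT₁meas hT₂meas hT₁nn hT₂nn hμ hT₂pos
  have hε₃le : ε₃ ≤ 1 := hε₃ ▸ integral_exp_neg_mul_le_one hT₃nn hμ.le
  have hk : 0 < ε₁ * (μ + d + α) / ε₁₂ - α * ε₃ := by
    rw [sub_pos, lt_div_iff₀ hε₁₂pos]
    nlinarith [mul_lt_mul_of_pos_right hε₁₂lt hμdα,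
      mul_le_mul_of_nonneg_left hε₃le (mul_nonneg hα hε₁₂pos.le)]
  have hGpos : ∀ x > 0, 0 < G x := fun x hx ↦ hG0 ▸ hGmono self_mem_Ici (le_of_lt hx) hx
  have hg₀ : 0 < g 0 := hganti.pos_of_hasDerivAt hderiv hGmono.monotoneOn
  have hGcont : ContinuousOn G (Ioi 0) := fun x hx ↦
    (hderiv x (le_of_lt hx)).continuousAt.continuousWithinAt
  obtain ⟨I, ⟨hI, hFI⟩, hI_unique⟩ :=
    existsUnique_pos_sub_mul_sub_mul_eq_zero (φ := fun x ↦ x / G x) hk (by positivity)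
    (continuousOn_id.div hGcont fun x hx ↦ (hGpos x hx).ne')
    ((hganti.strictConcaveOn_of_hasDerivAt (convex_Ici 0) hderiv).strictMonoOn_div_self hG0 hGpos)
    (fun x hx ↦ (div_pos hx (hGpos x hx)).le)
    ((hderiv 0 le_rfl).tendsto_div_self_nhdsGT_zero hG0 hg₀.ne')
    (mul_inv_lt_of_one_lt_reproductionNumber hB hβ hμ hμdα hε₁₂pos hg₀ hS₀ hR₀ hcond)
  refine ⟨((μ + d + α) * I / (β * ε₁₂ * G I), (ε₁ - ε₁₂) * (μ + d + α) * I / (μ * ε₁₂), I),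
    ⟨?_, ?_, hI, (steadyState_iff hβ.ne' hμ.ne' hε₁₂pos.ne' (hGpos I hI).ne').2 ⟨rfl, rfl, hFI⟩⟩,
    ?_⟩
  · have := hGpos I hI
    positivity
  · have := sub_pos.2 hε₁₂lt
    positivity
  rintro ⟨S, E, I'⟩ ⟨-, -, hI', hsol⟩
  dsimp only at hI' hsol
  obtain ⟨rfl, rfl, hFI'⟩ :=
    (steadyState_iff hβ.ne' hμ.ne' hε₁₂pos.ne' (hGpos I' hI').ne').1 hsol
  obtain rfl := hI_unique I' ⟨hI', hFI'⟩
  rfl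

/-- Theorem 5.1 of the paper: existence and uniqueness of the positive endemic
equilibrium of the deterministic SEIRS malaria model with arbitrarily distributed
random delays `T₁`, `T₂`, `T₃`. -/
theorem endemic_equilibrium_random_delays
    {Ω : Type*} [MeasurableSpace Ω] (P : Measure Ω) [IsProbabilityMeasure P]
    (T₁ T₂ T₃ : Ω → ℝ)
    (hT₁meas : Measurable T₁) (hT₂meas : Measurable T₂) (hT₃meas : Measurable T₃)
    (hT₁nn : ∀ ω, 0 ≤ T₁ ω) (hT₂nn : ∀ ω, 0 ≤ T₂ ω) (hT₃nn : ∀ ω, 0 ≤ T₃ ω)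
    (hindep : ProbabilityTheory.IndepFun T₁ T₂ P)
    (hT₂pos : 0 < P {ω | 0 < T₂ ω})
    (G g : ℝ → ℝ)
    (hderiv : ∀ x ≥ (0:ℝ), HasDerivAt G (g x) x)
    (hG0 : G 0 = 0)
    (hGmono : StrictMonoOn G (Set.Ici (0:ℝ)))
    (hganti : StrictAntiOn g (Set.Ici (0:ℝ)))
    (B β μ α d : ℝ) (hB : 0 < B) (hβ : 0 < β) (hμ : 0 < μ)
    (hα : 0 ≤ α) (hd : 0 ≤ d)
    (S₀ K₀ ε₁ ε₁₂ ε₃ : ℝ)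
    (hS₀ : S₀ = B / μ) (hK₀ : K₀ = 4 + S₀)
    (hε₁ : ε₁ = ∫ ω, Real.exp (-μ * T₁ ω) ∂P)
    (hε₁₂ : ε₁₂ = ∫ ω, Real.exp (-μ * (T₁ ω + T₂ ω)) ∂P)
    (hε₃ : ε₃ = ∫ ω, Real.exp (-μ * T₃ ω) ∂P)
    (hR₀ : 1 < (β * S₀ * K₀ + α) / (μ + d + α))
    (hcond : (K₀ + α / (β * S₀)) / g 0 ≤ ε₁₂) :
    ∃! p : ℝ × ℝ × ℝ,
      0 < p.1 ∧ 0 < p.2.1 ∧ 0 < p.2.2 ∧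
      B - β * p.1 * ε₁ * G p.2.2 - μ * p.1 + α * p.2.2 * ε₃ = 0 ∧
      β * p.1 * ε₁ * G p.2.2 - μ * p.2.1 - β * p.1 * ε₁₂ * G p.2.2 = 0 ∧
      β * p.1 * ε₁₂ * G p.2.2 - (μ + d + α) * p.2.2 = 0 :=
  endemic_equilibrium_random_delays_general P T₁ T₂ T₃ hT₁meas hT₂meas hT₁nn hT₂nn hT₃nn hT₂pos G g
    hderiv hG0 hGmono hganti B β μ α d hB hβ hμ hα hd S₀ K₀ ε₁ ε₁₂ ε₃ hS₀ hε₁ hε₁₂ hε₃ hR₀ hcond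
end

section
/- Let G : ℝ → ℝ and g : ℝ → ℝ be such that G has derivative g(x) at every x ≥ 0, G(0) = 0, G is strictly increasing on [0,∞), and g is strictly decreasing on [0,∞). Let c, B, κ, ρ > 0 satisfy c·g(0)·B > ρ. Then there exists a unique I > 0 such that c·G(I)·(B − κ·I) = ρ·I; moreover, this I satisfies 0 < I < B/κ. -/
/-!
Since `G` is strictly concave on `[0, ∞)` with `G 0 = 0`, the chord slope `G x / x` is positive and
strictly decreasing, so `φ x = c · (G x / x) · (B - κx)` decreases strictly on `(0, B/κ)` from
`c · g 0 · B > ρ` (its limit at `0⁺`) to `0 < ρ`. For `x > 0` the equation reads `φ x = ρ`, and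
every positive root lies below `B/κ` because `G x > 0`.
-/

open Set Filter Topology

lemma strictConcaveOn_Ici_of_hasDerivAt {f f' : ℝ → ℝ}
    (hf : ∀ x ≥ (0:ℝ), HasDerivAt f (f' x) x) (hf' : StrictAntiOn f' (Ici 0)) :
    StrictConcaveOn ℝ (Ici 0) f := by
  refine StrictAntiOn.strictConcaveOn_of_deriv (convex_Ici 0)
    (fun x hx => (hf x hx).continuousAt.continuousWithinAt) ?_
  rw [interior_Ici]
  exact (hf'.mono Ioi_subset_Ici_self).congr fun x hx => ((hf x (le_of_lt hx)).deriv).symm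

lemma StrictConcaveOn.strictAntiOn_div_of_map_zero {f : ℝ → ℝ}
    (hf : StrictConcaveOn ℝ (Ici 0) f) (h0 : f 0 = 0) :
    StrictAntiOn (fun x => f x / x) (Ioi 0) := by
  intro x hx y hy hxy
  simpa [h0] using hf.secant_strict_mono self_mem_Ici (Ioi_subset_Ici_self hx)
    (Ioi_subset_Ici_self hy) hx.ne' hy.ne' hxy

lemma HasDerivAt.tendsto_div_nhdsGT_of_map_zero {f : ℝ → ℝ} {f' : ℝ}
    (hf : HasDerivAt f f' 0) (h0 : f 0 = 0) :
    Tendsto (fun x => f x / x) (𝓝[>] 0) (𝓝 f') := by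
  simpa [h0, div_eq_inv_mul] using hf.tendsto_slope_zero_right

lemma exists_mem_Ioo_eq_of_tendsto_nhdsGT {φ : ℝ → ℝ} {b L y : ℝ} (hb : 0 < b)
    (hφ : ContinuousOn φ (Ioc 0 b)) (hlim : Tendsto φ (𝓝[>] 0) (𝓝 L))
    (hyL : y < L) (hby : φ b < y) :
    ∃ x ∈ Ioo 0 b, φ x = y := by
  obtain ⟨a, hya, ha⟩ := ((hlim.eventually (eventually_gt_nhds hyL)).and
    (Ioo_mem_nhdsGT hb)).exists
  obtain ⟨x, hx, hφx⟩ := intermediate_value_Ioo' ha.2.le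
    (hφ.mono (Icc_subset_Ioc_iff ha.2.le |>.mpr ⟨ha.1, le_rfl⟩)) ⟨hby, hya⟩
  exact ⟨x, ⟨ha.1.trans hx.1, hx.2⟩, hφx⟩

lemma mul_div_mul_eq_iff {a b d ρ x : ℝ} (hx : x ≠ 0) :
    a * (b / x) * d = ρ ↔ a * b * d = ρ * x := by
  rw [mul_div_assoc', div_mul_eq_mul_div, div_eq_iff hx]

lemma lt_div_of_mul_sub_eq {a B κ ρ x : ℝ} (ha : 0 < a) (hκ : 0 < κ) (hρ : 0 < ρ) (hx : 0 < x)
    (h : a * (B - κ * x) = ρ * x) : x < B / κ := by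
  rw [lt_div_iff₀ hκ]
  nlinarith [mul_pos hρ hx]

lemma strictAntiOn_mul_mul_sub {r : ℝ → ℝ} {c B κ : ℝ} (hc : 0 < c) (hκ : 0 < κ)
    (hr : StrictAntiOn r (Ioi 0)) (hr_pos : ∀ x, 0 < x → 0 < r x) :
    StrictAntiOn (fun x => c * r x * (B - κ * x)) (Ioo 0 (B / κ)) := by
  intro x hx y hy hxy
  have hy' : 0 < B - κ * y := by nlinarith [(lt_div_iff₀ hκ).1 hy.2]
  have hrxy : r y < r x := hr hx.1 hy.1 hxy
  have hsub : B - κ * y < B - κ * x := by linarith [mul_lt_mul_of_pos_left hxy hκ]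
  simpa only [mul_assoc] using
    mul_lt_mul_of_pos_left (mul_lt_mul hrxy hsub.le hy' (hr_pos x hx.1).le) hc

/-- One-dimensional root lemma underlying Theorems 5.1 and 5.2 of the paper:
the equation `c·G(I)·(B - κI) = ρI` has a unique positive root, which lies
in `(0, B/κ)`. -/
theorem unique_positive_root
    (G g : ℝ → ℝ)
    (hderiv : ∀ x ≥ (0:ℝ), HasDerivAt G (g x) x)
    (hG0 : G 0 = 0)
    (hGmono : StrictMonoOn G (Set.Ici (0:ℝ)))
    (hganti : StrictAntiOn g (Set.Ici (0:ℝ)))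
    (c B κ ρ : ℝ) (hc : 0 < c) (hB : 0 < B) (hκ : 0 < κ) (hρ : 0 < ρ)
    (hcond : ρ < c * g 0 * B) :
    ∃ I : ℝ, (0 < I ∧ c * G I * (B - κ * I) = ρ * I ∧ I < B / κ) ∧
      ∀ J : ℝ, 0 < J → c * G J * (B - κ * J) = ρ * J → J = I := by
  have hG_pos : ∀ x, 0 < x → 0 < G x := fun x hx => by
    simpa [hG0] using hGmono self_mem_Ici (mem_Ici.2 hx.le) hx
  set φ : ℝ → ℝ := fun x => c * (G x / x) * (B - κ * x) with hφ
  have hroot_lt : ∀ x, 0 < x → c * G x * (B - κ * x) = ρ * x → x < B / κ := fun x hx =>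
    lt_div_of_mul_sub_eq (mul_pos hc (hG_pos x hx)) hκ hρ hx
  have hφ_anti : StrictAntiOn φ (Ioo 0 (B / κ)) :=
    strictAntiOn_mul_mul_sub hc hκ
      ((strictConcaveOn_Ici_of_hasDerivAt hderiv hganti).strictAntiOn_div_of_map_zero hG0)
      fun x hx => div_pos (hG_pos x hx) hx
  have hφ_cont : ContinuousOn φ (Ioc 0 (B / κ)) :=
    (continuousOn_const.mul ((continuousOn_of_forall_continuousAt fun x hx =>
      (hderiv x hx.1.le).continuousAt).div continuousOn_id fun x hx => hx.1.ne')).mul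
      (by fun_prop)
  have hφ_lim : Tendsto φ (𝓝[>] 0) (𝓝 (c * g 0 * (B - κ * 0))) :=
    (tendsto_const_nhds.mul ((hderiv 0 le_rfl).tendsto_div_nhdsGT_of_map_zero hG0)).mul
      ((by fun_prop : Continuous fun x : ℝ => B - κ * x).continuousWithinAt)
  have hφ_end : φ (B / κ) < ρ := by
    simp only [hφ, mul_div_cancel₀ B hκ.ne', sub_self, mul_zero, hρ]
  obtain ⟨I, hI, hφI⟩ := exists_mem_Ioo_eq_of_tendsto_nhdsGT (div_pos hB hκ) hφ_cont hφ_lim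
    (by simpa using hcond) hφ_end
  refine ⟨I, ⟨hI.1, (mul_div_mul_eq_iff hI.1.ne').1 hφI, hI.2⟩, fun J hJ hJeq => ?_⟩
  exact hφ_anti.injOn ⟨hJ, hroot_lt J hJ hJeq⟩ hI
    (((mul_div_mul_eq_iff hJ.ne').2 hJeq).trans hφI.symm)
end
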